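/- arXiv:2004.10873 — 6 statements merged into one kernel-verified Lean document; each statement's English description precedes it below -/
import Mathlib

section
/- Let G = (A ∪ B, E) be bipartite and H be obtained from G by adding vertices u, v with N_H(u) = A and N_H(v) = B. If ⟨I₁,…,I_r⟩ is a sequence of independent sets of G such that for each i, |I_i| = |I_{i+1}| and |I_i \ I_{i+1}| = |I_{i+1} \ I_i| = 1 (a TJ-reconfiguration sequence of independent sets), then ⟨V(G)\I₁, …, V(G)\I_r⟩ is a TJ-reconfiguration sequence of uv-separators in H, i.e., each V(G)\I_i is a uv-separator and consecutive sets have equal size and symmetric difference of size two. -/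
/-!
A `uv`-walk in `H` has to leave `{u} ∪ A`; it can only do so along an edge `xy` with `x ∈ A`,
`y ∈ B`, and as `I` is independent one of `x`, `y` lies in `(A ∪ B) \ I`. Complementation inside
`A ∪ B` exchanges the two one-element differences of a token jump.
-/

/-- `S` is a `uv`-separator in `G`. -/
def IsSep {V : Type*} (G : SimpleGraph V) (u v : V) (S : Set V) : Prop :=
  u ∉ S ∧ v ∉ S ∧ ∀ p : G.Walk u v, ∃ w ∈ S, w ∈ p.support

/-- `I` is an independent set of `G`. -/
def IsIndep {V : Type*} (G : SimpleGraph V) (I : Set V) : Prop :=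
  ∀ x ∈ I, ∀ y ∈ I, ¬ G.Adj x y

theorem Set.encard_eq_encard_of_encard_sdiff_eq {α : Type*} {s t : Set α}
    (h : (s \ t).encard = (t \ s).encard) : s.encard = t.encard := by
  rw [← Set.encard_sdiff_add_encard_inter s t, ← Set.encard_sdiff_add_encard_inter t s, h,
    Set.inter_comm]

def IsTokenJump {α : Type*} (S T : Set α) : Prop :=
  S.ncard = T.ncard ∧ (S \ T).ncard = 1 ∧ (T \ S).ncard = 1

/-- Also for infinite sets, where `ncard` is `0`. -/
theorem IsTokenJump.of_ncard_sdiff {α : Type*} {S T : Set α}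
    (hST : (S \ T).ncard = 1) (hTS : (T \ S).ncard = 1) : IsTokenJump S T := by
  refine ⟨?_, hST, hTS⟩
  obtain ⟨a, ha⟩ := Set.ncard_eq_one.mp hST
  obtain ⟨b, hb⟩ := Set.ncard_eq_one.mp hTS
  rw [Set.ncard_def, Set.ncard_def,
    Set.encard_eq_encard_of_encard_sdiff_eq (by rw [ha, hb, Set.encard_singleton,
      Set.encard_singleton])]

theorem IsTokenJump.sdiff_left {α : Type*} {U S T : Set α} (hS : S ⊆ U) (hT : T ⊆ U)
    (h : IsTokenJump S T) : IsTokenJump (U \ S) (U \ T) := by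
  apply IsTokenJump.of_ncard_sdiff
  · rw [sdiff_sdiff_sdiff_cancel_left hT]
    exact h.2.2
  · rw [sdiff_sdiff_sdiff_cancel_left hS]
    exact h.2.1

theorem isSep_sdiff_of_isIndep {V : Type*} {H : SimpleGraph V} {A B I : Set V} {u v : V}
    (hdisj : Disjoint A B) (hu : u ∉ A ∪ B) (hv : v ∉ A ∪ B) (huv : u ≠ v)
    (hcover : insert u (insert v (A ∪ B)) = Set.univ)
    (hNu : H.neighborSet u = A) (hNv : H.neighborSet v = B) (hI : IsIndep H I) :
    IsSep H u v ((A ∪ B) \ I) := by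
  refine ⟨fun h => hu h.1, fun h => hv h.1, fun p => ?_⟩
  have hvu : v ∉ insert u A := by
    rintro (h | h)
    exacts [huv h.symm, hv (Or.inl h)]
  obtain ⟨d, hd, hx, hy⟩ := p.exists_boundary_dart (insert u A) (Set.mem_insert u A) hvu
  obtain ⟨⟨x, y⟩, hxy⟩ := d
  simp only [Set.mem_insert_iff, not_or] at hx hy
  obtain ⟨hyu, hyA⟩ := hy
  rcases hx with rfl | hxA
  · exact absurd (hNu ▸ hxy : y ∈ A) hyA
  by_cases hxI : x ∈ I
  · have hyv : y ≠ v := by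
      rintro rfl
      exact hdisj.ne_of_mem hxA (hNv ▸ hxy.symm : x ∈ B) rfl
    have hyAB : y ∈ A ∪ B := by
      have hy : y ∈ insert u (insert v (A ∪ B)) := hcover ▸ Set.mem_univ y
      simpa [hyu, hyv] using hy
    exact ⟨y, ⟨hyAB, fun hyI => hI x hxI y hyI hxy⟩, p.dart_snd_mem_support_of_mem_darts hd⟩
  · exact ⟨x, ⟨Or.inl hxA, hxI⟩, p.dart_fst_mem_support_of_mem_darts hd⟩

theorem stmt2_general {V : Type*} (H : SimpleGraph V) (A B : Set V) (u v : V)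
    (hdisj : Disjoint A B) (hu : u ∉ A ∪ B) (hv : v ∉ A ∪ B) (huv : u ≠ v)
    (hcover : insert u (insert v (A ∪ B)) = Set.univ)
    (hNu : H.neighborSet u = A) (hNv : H.neighborSet v = B)
    (r : ℕ) (I : ℕ → Set V)
    (hIsub : ∀ i < r, I i ⊆ A ∪ B)
    (hindep : ∀ i < r, IsIndep H (I i))
    (hTJ : ∀ i, i + 1 < r → (I i).ncard = (I (i + 1)).ncard ∧
      (I i \ I (i + 1)).ncard = 1 ∧ (I (i + 1) \ I i).ncard = 1) :
    (∀ i < r, IsSep H u v ((A ∪ B) \ I i)) ∧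
    (∀ i, i + 1 < r →
      ((A ∪ B) \ I i).ncard = ((A ∪ B) \ I (i + 1)).ncard ∧
      (((A ∪ B) \ I i) \ ((A ∪ B) \ I (i + 1))).ncard = 1 ∧
      (((A ∪ B) \ I (i + 1)) \ ((A ∪ B) \ I i)).ncard = 1) :=
  ⟨fun i hi => isSep_sdiff_of_isIndep hdisj hu hv huv hcover hNu hNv (hindep i hi),
    fun i hi => IsTokenJump.sdiff_left (hIsub i (by omega)) (hIsub (i + 1) hi) (hTJ i hi)⟩

/-- A TJ-reconfiguration sequence of independent sets of the bipartite graph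
`G = H[A ∪ B]` is turned into a TJ-reconfiguration sequence of
`uv`-separators of `H` by complementation. -/
theorem stmt2 {V : Type*} [Fintype V] (H : SimpleGraph V) (A B : Set V) (u v : V)
    (hdisj : Disjoint A B) (hu : u ∉ A ∪ B) (hv : v ∉ A ∪ B) (huv : u ≠ v)
    (hcover : insert u (insert v (A ∪ B)) = Set.univ)
    (hNu : H.neighborSet u = A) (hNv : H.neighborSet v = B)
    (hbip : ∀ x y, x ∈ A ∪ B → y ∈ A ∪ B → H.Adj x y →
      (x ∈ A ∧ y ∈ B) ∨ (x ∈ B ∧ y ∈ A))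
    (r : ℕ) (I : ℕ → Set V)
    (hIsub : ∀ i < r, I i ⊆ A ∪ B)
    (hindep : ∀ i < r, IsIndep H (I i))
    (hTJ : ∀ i, i + 1 < r → (I i).ncard = (I (i + 1)).ncard ∧
      (I i \ I (i + 1)).ncard = 1 ∧ (I (i + 1) \ I i).ncard = 1) :
    (∀ i < r, IsSep H u v ((A ∪ B) \ I i)) ∧
    (∀ i, i + 1 < r →
      ((A ∪ B) \ I i).ncard = ((A ∪ B) \ I (i + 1)).ncard ∧
      (((A ∪ B) \ I i) \ ((A ∪ B) \ I (i + 1))).ncard = 1 ∧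
      (((A ∪ B) \ I (i + 1)) \ ((A ∪ B) \ I i)).ncard = 1) :=
  stmt2_general H A B u v hdisj hu hv huv hcover hNu hNv r I hIsub hindep hTJ
end

section
/- Let G be a connected graph that is not complete and suppose G has a universal vertex v. If G is {3P₁, diamond}-free (G contains no independent set of size 3 and no induced diamond), then G is the union of two cliques whose intersection is {v}; in particular v is a cut vertex and every other vertex lies in exactly one of the two cliques. -/
/-- `G` has no independent set of size 3. -/
def ThreeP1Free {V : Type*} (G : SimpleGraph V) : Prop :=
  ∀ a b c : V, a ≠ b → a ≠ c → b ≠ c → G.Adj a b ∨ G.Adj a c ∨ G.Adj b c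

/-- `G` has no induced diamond (`K₄` minus an edge). -/
def DiamondFree {V : Type*} (G : SimpleGraph V) : Prop :=
  ¬ ∃ a b c d : V, a ≠ b ∧ a ≠ c ∧ a ≠ d ∧ b ≠ c ∧ b ≠ d ∧ c ≠ d ∧
      G.Adj a b ∧ G.Adj a c ∧ G.Adj a d ∧ G.Adj b c ∧ G.Adj b d ∧ ¬ G.Adj c d

/-!
Removing the universal vertex `v` leaves a graph in which "equal or adjacent" is transitive:
a path `x - y - z` with `x, z` non-adjacent would, together with `v`, induce a diamond. So
`G - v` is a disjoint union of cliques, and there are at most two of them because `G` has no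
independent triple. Two non-adjacent vertices `a, b` then lie in different cliques, the closed
neighbourhoods `N[a]` and `N[b]` are the two cliques of `G` through `v`, and every `a`–`b` walk
has to leave `N[a]` through `v`.
-/

namespace SimpleGraph

variable {V : Type*} {G : SimpleGraph V}

theorem Walk.mem_support_of_forall_adj_notMem {S : Set V} {v a b : V} (p : G.Walk a b)
    (ha : a ∈ S) (hb : b ∉ S) (hS : ∀ x y, x ∈ S → G.Adj x y → y ∉ S → x = v ∨ y = v) :
    v ∈ p.support := by
  obtain ⟨d, hdp, hfst, hsnd⟩ := p.exists_boundary_dart S ha hb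
  rcases hS _ _ hfst d.adj hsnd with h | h
  · exact h ▸ p.dart_fst_mem_support_of_mem_darts hdp
  · exact h ▸ p.dart_snd_mem_support_of_mem_darts hdp

end SimpleGraph

open SimpleGraph

section

variable {V : Type*} {G : SimpleGraph V}

theorem ThreeP1Free.insert_neighborSet_union (h3 : ThreeP1Free G) {a b : V} (hab : a ≠ b)
    (hnadj : ¬ G.Adj a b) : insert a (G.neighborSet a) ∪ insert b (G.neighborSet b) = Set.univ := by
  refine Set.eq_univ_of_forall fun x => ?_
  simp only [Set.mem_union, Set.mem_insert_iff, mem_neighborSet]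
  by_cases hxa : x = a
  · exact .inl (.inl hxa)
  by_cases hxb : x = b
  · exact .inr (.inl hxb)
  rcases h3 a b x hab (Ne.symm hxa) (Ne.symm hxb) with h | h | h
  · exact absurd h hnadj
  · exact .inl (.inr h)
  · exact .inr (.inr h)

theorem DiamondFree.isClique_commonNeighbors (hd : DiamondFree G) {a b : V} (hab : G.Adj a b) :
    G.IsClique (G.commonNeighbors a b) := by
  intro c hc d hd' hcd
  rw [mem_commonNeighbors] at hc hd'
  by_contra hncd
  exact hd ⟨a, b, c, d, hab.ne, hc.1.ne, hd'.1.ne, hc.2.ne, hd'.2.ne, hcd,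
    hab, hc.1, hd'.1, hc.2, hd'.2, hncd⟩

section UniversalVertex

variable {v : V} (huniv : ∀ x, x ≠ v → G.Adj v x) (hd : DiamondFree G)
include huniv hd

theorem DiamondFree.eq_or_adj_trans {x y z : V} (hx : x ≠ v) (hy : y ≠ v) (hz : z ≠ v)
    (hxy : x = y ∨ G.Adj x y) (hyz : y = z ∨ G.Adj y z) : x = z ∨ G.Adj x z := by
  rcases hxy with rfl | hxy
  · exact hyz
  rcases hyz with rfl | hyz
  · exact .inr hxy
  by_cases hxz : x = z
  · exact .inl hxz
  refine .inr (hd.isClique_commonNeighbors (huniv y hy) ?_ ?_ hxz)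
  · exact G.mem_commonNeighbors.2 ⟨huniv x hx, hxy.symm⟩
  · exact G.mem_commonNeighbors.2 ⟨huniv z hz, hyz⟩

theorem DiamondFree.isClique_insert_neighborSet {c : V} (hc : c ≠ v) :
    G.IsClique (insert c (G.neighborSet c)) := by
  intro x hx y hy hxy
  by_cases hxv : x = v
  · exact hxv ▸ huniv y (hxv ▸ Ne.symm hxy)
  by_cases hyv : y = v
  · exact hyv ▸ (huniv x (hyv ▸ hxy)).symm
  rw [Set.mem_insert_iff, mem_neighborSet] at hx hy
  have hxc : x = c ∨ G.Adj x c := hx.imp id G.adj_symm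
  exact (hd.eq_or_adj_trans huniv hxv hc hyv hxc (hy.imp Eq.symm id)).resolve_left hxy

theorem DiamondFree.mem_insert_neighborSet_of_adj {c x y : V} (hc : c ≠ v) (hx : x ≠ v)
    (hy : y ≠ v) (hxc : x ∈ insert c (G.neighborSet c)) (hxy : G.Adj x y) :
    y ∈ insert c (G.neighborSet c) := by
  rw [Set.mem_insert_iff, mem_neighborSet] at hxc ⊢
  exact (hd.eq_or_adj_trans huniv hc hx hy (hxc.imp Eq.symm id) (.inr hxy)).imp Eq.symm id

theorem DiamondFree.insert_neighborSet_inter {a b : V} (ha : a ≠ v) (hb : b ≠ v) (hab : a ≠ b)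
    (hnadj : ¬ G.Adj a b) : insert a (G.neighborSet a) ∩ insert b (G.neighborSet b) = {v} := by
  ext x
  simp only [Set.mem_inter_iff, Set.mem_insert_iff, mem_neighborSet, Set.mem_singleton_iff]
  constructor
  · rintro ⟨hxa, hxb⟩
    by_contra hxv
    have := hd.eq_or_adj_trans huniv ha hxv hb (hxa.imp Eq.symm id) (hxb.imp id G.adj_symm)
    exact this.elim hab hnadj
  · rintro rfl
    exact ⟨.inr (huniv a ha).symm, .inr (huniv b hb).symm⟩

end UniversalVertex

end

theorem stmt5_general {V : Type*} (G : SimpleGraph V)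
    (hnotcomplete : ∃ a b : V, a ≠ b ∧ ¬ G.Adj a b)
    (v : V) (huniv : ∀ x, x ≠ v → G.Adj v x)
    (h3 : ThreeP1Free G) (hd : DiamondFree G) :
    ∃ Q₁ Q₂ : Set V, G.IsClique Q₁ ∧ G.IsClique Q₂ ∧ Q₁ ∪ Q₂ = Set.univ ∧
      Q₁ ∩ Q₂ = {v} ∧
      ∃ a b : V, a ≠ v ∧ b ≠ v ∧ a ≠ b ∧ ∀ p : G.Walk a b, v ∈ p.support := by
  obtain ⟨a, b, hab, hnadj⟩ := hnotcomplete
  have hav : a ≠ v := fun h => hnadj (h ▸ huniv b (h ▸ Ne.symm hab))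
  have hbv : b ≠ v := fun h => hnadj (h ▸ huniv a (h ▸ hab)).symm
  have hb : b ∉ insert a (G.neighborSet a) := by
    rintro (h | h)
    exacts [hab h.symm, hnadj h]
  refine ⟨_, _, hd.isClique_insert_neighborSet huniv hav, hd.isClique_insert_neighborSet huniv hbv,
    h3.insert_neighborSet_union hab hnadj, hd.insert_neighborSet_inter huniv hav hbv hab hnadj,
    a, b, hav, hbv, hab, fun p => p.mem_support_of_forall_adj_notMem (Set.mem_insert a _) hb ?_⟩
  intro x y hx hxy hy
  by_contra! hxyv
  exact hy (hd.mem_insert_neighborSet_of_adj huniv hav hxyv.1 hxyv.2 hx hxy)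

/-- A connected, non-complete, `{3P₁, diamond}`-free graph with a universal
vertex `v` is the union of two cliques meeting exactly in `v`, and `v` is a
cut vertex. -/
theorem stmt5 {V : Type*} (G : SimpleGraph V) (hconn : G.Connected)
    (hnotcomplete : ∃ a b : V, a ≠ b ∧ ¬ G.Adj a b)
    (v : V) (huniv : ∀ x, x ≠ v → G.Adj v x)
    (h3 : ThreeP1Free G) (hd : DiamondFree G) :
    ∃ Q₁ Q₂ : Set V, G.IsClique Q₁ ∧ G.IsClique Q₂ ∧ Q₁ ∪ Q₂ = Set.univ ∧
      Q₁ ∩ Q₂ = {v} ∧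
      ∃ a b : V, a ≠ v ∧ b ≠ v ∧ a ≠ b ∧ ∀ p : G.Walk a b, v ∈ p.support :=
  stmt5_general G hnotcomplete v huniv h3 hd
end

section
/- Let G be a {3P₁, diamond}-free graph and u, w non-adjacent vertices of G. Then N(u) \ N(w) induces a clique in G. -/
theorem ThreeP1Free.isClique_nonNeighbors {V : Type*} {G : SimpleGraph V} (h3 : ThreeP1Free G)
    (w : V) : G.IsClique {x | x ≠ w ∧ ¬ G.Adj x w} := by
  rintro x ⟨hxw, hx⟩ y ⟨hyw, hy⟩ hxy
  rcases h3 x y w hxy hxw hyw with h | h | h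
  · exact h
  · exact absurd h hx
  · exact absurd h hy

theorem stmt8_general {V : Type*} (G : SimpleGraph V)
    (h3 : ThreeP1Free G)
    (u w : V) (hna : ¬ G.Adj u w) :
    G.IsClique (G.neighborSet u \ G.neighborSet w) := by
  refine (h3.isClique_nonNeighbors w).subset ?_
  rintro x ⟨hux, hwx⟩
  exact ⟨by rintro rfl; exact hna hux, fun hxw => hwx hxw.symm⟩

/-- In a `{3P₁, diamond}`-free graph, for non-adjacent `u, w`, the set
`N(u) \ N(w)` induces a clique. -/
theorem stmt8 {V : Type*} (G : SimpleGraph V)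
    (h3 : ThreeP1Free G) (hd : DiamondFree G)
    (u w : V) (huw : u ≠ w) (hna : ¬ G.Adj u w) :
    G.IsClique (G.neighborSet u \ G.neighborSet w) :=
  stmt8_general G h3 u w hna
end

section
/- Let G be a graph with non-adjacent vertices u,v, and suppose the family 𝐒 of minimal uv-separators of G is finite. Define the graph H on vertex set 𝐒 with an edge between minimal separators S_i and S_j whenever |S_i ∪ S_j| ≤ k. Then for uv-separators S_a, S_b of G with |S_a|, |S_b| ≤ k, there exists a k-TAR reconfiguration sequence from S_a to S_b if and only if there exist minimal uv-separators S_a' ⊆ S_a and S_b' ⊆ S_b lying in the same connected component of H. -/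
/-- `S` is a minimal `uv`-separator in `G`. -/
def MinSep {V : Type*} (G : SimpleGraph V) (u v : V) (S : Set V) : Prop :=
  IsSep G u v S ∧ ∀ T ⊂ S, ¬ IsSep G u v T

/-!
A `k`-TAR sequence is a walk in the graph whose vertices are the `uv`-separators of size at most
`k`, adjacent when they differ in one vertex. Deleting vertices one at a time moves from any such
separator down to any separator it contains, so two minimal separators `X, Y` with `|X ∪ Y| ≤ k`
are joined through `X ∪ Y`. Conversely, along a TAR sequence one tracks a minimal separator
contained in the current set: an addition keeps it, and after a removal a new minimal separator of
the smaller set is adjacent to the old one in `H`, since both lie in the previous set.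
-/

open Relation

theorem exists_seq_iff_reflTransGen {α : Type*} {p : α → Prop} {r : α → α → Prop} {a b : α}
    (ha : p a) :
    (∃ (n : ℕ) (f : ℕ → α), f 0 = a ∧ f n = b ∧
        (∀ i ≤ n, p (f i)) ∧ ∀ i < n, r (f i) (f (i + 1))) ↔
      ReflTransGen (fun x y => p x ∧ p y ∧ r x y) a b := by
  constructor
  · rintro ⟨n, f, rfl, rfl, hp, hr⟩
    suffices ∀ m ≤ n, ReflTransGen (fun x y => p x ∧ p y ∧ r x y) (f 0) (f m) from this n le_rfl
    intro m hm
    induction m with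
    | zero => rfl
    | succ m ih => exact (ih (by omega)).tail ⟨hp m (by omega), hp (m + 1) hm, hr m hm⟩
  · intro h
    induction h with
    | refl => exact ⟨0, fun _ => a, rfl, rfl, fun _ _ => ha, fun _ h => absurd h (Nat.not_lt_zero _)⟩
    | @tail b c _ hbc ih =>
      obtain ⟨n, f, h0, hn, hp, hr⟩ := ih
      refine ⟨n + 1, fun i => if i ≤ n then f i else c, by simp [h0], by simp, ?_, ?_⟩
      · intro i hi
        by_cases h : i ≤ n
        · simpa [h] using hp i h
        · simpa [h] using hbc.2.1
      · intro i hi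
        by_cases h : i + 1 ≤ n
        · simpa [h, show i ≤ n by omega] using hr i h
        · obtain rfl : i = n := by omega
          simpa [hn] using hbc.2.2

theorem Set.subset_or_subset_of_ncard_symmDiff_eq_one {α : Type*} {A B : Set α}
    (h : (symmDiff A B).ncard = 1) : A ⊆ B ∨ B ⊆ A := by
  obtain ⟨x, hx⟩ := Set.ncard_eq_one.mp h
  have hx' : x ∈ symmDiff A B := hx ▸ rfl
  rcases Set.mem_symmDiff.mp hx' with ⟨hxA, hxB⟩ | ⟨hxB, hxA⟩
  · refine Or.inr fun y hyB => by_contra fun hyA => ?_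
    have : y = x := by simpa [hx] using Set.mem_symmDiff.mpr (Or.inr ⟨hyB, hyA⟩)
    exact hyA (this ▸ hxA)
  · refine Or.inl fun y hyA => by_contra fun hyB => ?_
    have : y = x := by simpa [hx] using Set.mem_symmDiff.mpr (Or.inl ⟨hyA, hyB⟩)
    exact hyB (this ▸ hxB)

section Separators

variable {V : Type*} {G : SimpleGraph V} {u v : V}

theorem IsSep.mono {S T : Set V} (hS : IsSep G u v S) (hST : S ⊆ T) (hu : u ∉ T) (hv : v ∉ T) :
    IsSep G u v T :=
  ⟨hu, hv, fun p => (hS.2.2 p).imp fun _ hw => ⟨hST hw.1, hw.2⟩⟩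

theorem IsSep.exists_minSep_subset [Finite V] {S : Set V} (hS : IsSep G u v S) :
    ∃ M ⊆ S, MinSep G u v M := by
  obtain ⟨M, hMS, hM⟩ := exists_minimal_le_of_wellFoundedLT (IsSep G u v) S hS
  exact ⟨M, hMS, (minimal_iff_forall_lt.mp hM).1, fun T hT => (minimal_iff_forall_lt.mp hM).2 hT⟩

variable (G u v) (k : ℕ)

def TarAdj (A B : Set V) : Prop :=
  (IsSep G u v A ∧ A.ncard ≤ k) ∧ (IsSep G u v B ∧ B.ncard ≤ k) ∧ (symmDiff A B).ncard = 1

/-- Adjacency in the graph `H` of the paper. -/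
def MinSepAdj (X Y : Set V) : Prop :=
  MinSep G u v X ∧ MinSep G u v Y ∧ (X ∪ Y).ncard ≤ k

instance : Std.Symm (TarAdj G u v k) where
  symm _ _ h := ⟨h.2.1, h.1, symmDiff_comm (α := Set V) _ _ ▸ h.2.2⟩

variable {G u v k}

theorem reflTransGen_tarAdj_of_subset [Finite V] {A B : Set V} (hB : IsSep G u v B) (hBA : B ⊆ A)
    (hu : u ∉ A) (hv : v ∉ A) (hA : A.ncard ≤ k) : ReflTransGen (TarAdj G u v k) A B := by
  have hsmall : ∀ C, B ⊆ C → C ⊆ A → IsSep G u v C ∧ C.ncard ≤ k := fun C hBC hCA =>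
    ⟨hB.mono hBC (fun h => hu (hCA h)) (fun h => hv (hCA h)), (Set.ncard_le_ncard hCA).trans hA⟩
  rw [← Set.union_sdiff_cancel hBA]
  refine Set.Finite.induction_on_subset
    (motive := fun D _ => ReflTransGen (TarAdj G u v k) (B ∪ D) B) (A \ B) (Set.toFinite _)
    (by rw [Set.union_empty]) fun {x D} hx hD hxD ih => ?_
  have hxD' : x ∉ B ∪ D := fun h => h.elim hx.2 hxD
  have hstep : symmDiff (B ∪ insert x D) (B ∪ D) = {x} := by
    rw [Set.union_insert, symmDiff_of_ge (Set.subset_insert _ _),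
      Set.insert_sdiff_eq_singleton hxD']
  have hDA : D ⊆ A := hD.trans Set.sdiff_subset
  refine ih.head ⟨hsmall _ Set.subset_union_left ?_, hsmall _ Set.subset_union_left
    (Set.union_subset hBA hDA), by rw [hstep, Set.ncard_singleton]⟩
  exact Set.union_subset hBA (Set.insert_subset hx.1 hDA)

theorem MinSepAdj.reflTransGen_tarAdj [Finite V] {X Y : Set V} (h : MinSepAdj G u v k X Y) :
    ReflTransGen (TarAdj G u v k) X Y := by
  obtain ⟨hX, hY, hk⟩ := h
  have hu : u ∉ X ∪ Y := fun h => h.elim hX.1.1 hY.1.1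
  have hv : v ∉ X ∪ Y := fun h => h.elim hX.1.2.1 hY.1.2.1
  exact (symm_of (ReflTransGen (TarAdj G u v k))
    (reflTransGen_tarAdj_of_subset hX.1 Set.subset_union_left hu hv hk)).trans
      (reflTransGen_tarAdj_of_subset hY.1 Set.subset_union_right hu hv hk)

theorem Relation.ReflTransGen.tarAdj_of_minSepAdj [Finite V] {X Y : Set V}
    (h : ReflTransGen (MinSepAdj G u v k) X Y) : ReflTransGen (TarAdj G u v k) X Y := by
  induction h with
  | refl => rfl
  | tail _ hYZ ih => exact ih.trans hYZ.reflTransGen_tarAdj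

theorem Relation.ReflTransGen.exists_minSepAdj [Finite V] {A B M : Set V}
    (h : ReflTransGen (TarAdj G u v k) A B) (hM : MinSep G u v M) (hMA : M ⊆ A) :
    ∃ M' ⊆ B, MinSep G u v M' ∧ ReflTransGen (MinSepAdj G u v k) M M' := by
  induction h with
  | refl => exact ⟨M, hMA, hM, .refl⟩
  | @tail X Y _ hXY ih =>
    obtain ⟨N, hNX, hN, hMN⟩ := ih
    rcases Set.subset_or_subset_of_ncard_symmDiff_eq_one hXY.2.2 with hXY' | hYX
    · exact ⟨N, hNX.trans hXY', hN, hMN⟩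
    · obtain ⟨N', hN'Y, hN'⟩ := hXY.2.1.1.exists_minSep_subset
      have hk : (N ∪ N').ncard ≤ k :=
        (Set.ncard_le_ncard (Set.union_subset hNX (hN'Y.trans hYX))).trans hXY.1.2
      exact ⟨N', hN'Y, hN', hMN.tail ⟨hN, hN', hk⟩⟩

end Separators

theorem stmt10_general {V : Type*} [Fintype V] (G : SimpleGraph V) (u v : V)
    (k : ℕ) (Sa Sb : Set V)
    (hSa : IsSep G u v Sa) (hSb : IsSep G u v Sb)
    (hka : Sa.ncard ≤ k) (hkb : Sb.ncard ≤ k) :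
    (∃ (n : ℕ) (f : ℕ → Set V), f 0 = Sa ∧ f n = Sb ∧
        (∀ i ≤ n, IsSep G u v (f i) ∧ (f i).ncard ≤ k) ∧
        (∀ i < n, (symmDiff (f i) (f (i + 1))).ncard = 1)) ↔
    (∃ Sa' Sb' : Set V, Sa' ⊆ Sa ∧ Sb' ⊆ Sb ∧
        MinSep G u v Sa' ∧ MinSep G u v Sb' ∧
        Relation.ReflTransGen
          (fun X Y => MinSep G u v X ∧ MinSep G u v Y ∧ (X ∪ Y).ncard ≤ k)
          Sa' Sb') := by
  rw [exists_seq_iff_reflTransGen (p := fun S => IsSep G u v S ∧ S.ncard ≤ k)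
    (r := fun A B => (symmDiff A B).ncard = 1) ⟨hSa, hka⟩]
  constructor
  · intro h
    obtain ⟨Sa', hSa'Sa, hSa'⟩ := hSa.exists_minSep_subset
    obtain ⟨Sb', hSb'Sb, hSb', hH⟩ := h.exists_minSepAdj hSa' hSa'Sa
    exact ⟨Sa', Sb', hSa'Sa, hSb'Sb, hSa', hSb', hH⟩
  · rintro ⟨Sa', Sb', hSa'Sa, hSb'Sb, hSa', hSb', hH⟩
    have hdown := reflTransGen_tarAdj_of_subset hSa'.1 hSa'Sa hSa.1 hSa.2.1 hka
    have hup := symm_of (ReflTransGen (TarAdj G u v k))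
      (reflTransGen_tarAdj_of_subset hSb'.1 hSb'Sb hSb.1 hSb.2.1 hkb)
    exact (hdown.trans hH.tarAdj_of_minSepAdj).trans hup

/-- There is a `k`-TAR reconfiguration sequence between the `uv`-separators
`Sa` and `Sb` iff some minimal separators `Sa' ⊆ Sa` and `Sb' ⊆ Sb` lie in the
same connected component of the graph `H` on minimal separators in which two
minimal separators are adjacent whenever their union has at most `k`
vertices. -/
theorem stmt10 {V : Type*} [Fintype V] (G : SimpleGraph V) (u v : V)
    (huv : ¬ G.Adj u v) (hune : u ≠ v) (k : ℕ) (Sa Sb : Set V)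
    (hSa : IsSep G u v Sa) (hSb : IsSep G u v Sb)
    (hka : Sa.ncard ≤ k) (hkb : Sb.ncard ≤ k) :
    (∃ (n : ℕ) (f : ℕ → Set V), f 0 = Sa ∧ f n = Sb ∧
        (∀ i ≤ n, IsSep G u v (f i) ∧ (f i).ncard ≤ k) ∧
        (∀ i < n, (symmDiff (f i) (f (i + 1))).ncard = 1)) ↔
    (∃ Sa' Sb' : Set V, Sa' ⊆ Sa ∧ Sb' ⊆ Sb ∧
        MinSep G u v Sa' ∧ MinSep G u v Sb' ∧
        Relation.ReflTransGen
          (fun X Y => MinSep G u v X ∧ MinSep G u v Y ∧ (X ∪ Y).ncard ≤ k)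
          Sa' Sb') :=
  stmt10_general G u v k Sa Sb hSa hSb hka hkb
end

section
/- Let G be a graph in which the vertex set is partitioned into two cliques Q₁ and Q₂ such that the set of edges between Q₁ and Q₂ forms a matching (each vertex of Q₁ has at most one neighbor in Q₂ and vice versa). Then G is {3P₁, diamond}-free: G contains no independent set of size 3 and no induced diamond. -/
namespace SimpleGraph

variable {V : Type*} {G : SimpleGraph V} {Q₁ Q₂ : Set V}

theorem threeP1Free_of_isClique_of_cover (hcover : ∀ x, x ∈ Q₁ ∨ x ∈ Q₂)
    (hc₁ : G.IsClique Q₁) (hc₂ : G.IsClique Q₂) : ThreeP1Free G := by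
  intro a b c hab hac hbc
  rcases hcover a with ha | ha <;> rcases hcover b with hb | hb <;>
    rcases hcover c with hc | hc <;>
    first
    | exact .inl (hc₁ ha hb hab) | exact .inl (hc₂ ha hb hab)
    | exact .inr (.inl (hc₁ ha hc hac)) | exact .inr (.inl (hc₂ ha hc hac))
    | exact .inr (.inr (hc₁ hb hc hbc)) | exact .inr (.inr (hc₂ hb hc hbc))

theorem isIndepSet_commonNeighbors_of_matching (hcover : ∀ x, x ∈ Q₁ ∨ x ∈ Q₂)
    (hm₁ : ∀ x ∈ Q₁, ∀ y ∈ Q₂, ∀ z ∈ Q₂, G.Adj x y → G.Adj x z → y = z)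
    (hm₂ : ∀ x ∈ Q₂, ∀ y ∈ Q₁, ∀ z ∈ Q₁, G.Adj x y → G.Adj x z → y = z)
    {c d : V} (hc : c ∈ Q₁) (hd : d ∈ Q₂) : G.IsIndepSet (G.commonNeighbors c d) := by
  intro a ha b hb _ hab
  obtain ⟨hca, hda⟩ := G.mem_commonNeighbors.1 ha
  obtain ⟨hcb, hdb⟩ := G.mem_commonNeighbors.1 hb
  rcases hcover a with ha | ha <;> rcases hcover b with hb | hb
  · exact hab.ne (hm₂ d hd a ha b hb hda hdb)
  · exact hdb.ne' (hm₁ a ha b hb d hd hab hda.symm)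
  · exact hda.ne' (hm₁ b hb a ha d hd hab.symm hdb.symm)
  · exact hab.ne (hm₁ c hc a ha b hb hca hcb)

theorem mem_of_ne_of_not_adj (hcover : ∀ x, x ∈ Q₁ ∨ x ∈ Q₂)
    (hc₁ : G.IsClique Q₁) (hc₂ : G.IsClique Q₂) {c d : V} (hcd : c ≠ d) (hncd : ¬G.Adj c d) :
    c ∈ Q₁ ∧ d ∈ Q₂ ∨ c ∈ Q₂ ∧ d ∈ Q₁ := by
  rcases hcover c with hc | hc <;> rcases hcover d with hd | hd
  · exact absurd (hc₁ hc hd hcd) hncd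
  · exact .inl ⟨hc, hd⟩
  · exact .inr ⟨hc, hd⟩
  · exact absurd (hc₂ hc hd hcd) hncd

theorem diamondFree_of_isClique_of_matching (hcover : ∀ x, x ∈ Q₁ ∨ x ∈ Q₂)
    (hc₁ : G.IsClique Q₁) (hc₂ : G.IsClique Q₂)
    (hm₁ : ∀ x ∈ Q₁, ∀ y ∈ Q₂, ∀ z ∈ Q₂, G.Adj x y → G.Adj x z → y = z)
    (hm₂ : ∀ x ∈ Q₂, ∀ y ∈ Q₁, ∀ z ∈ Q₁, G.Adj x y → G.Adj x z → y = z) : DiamondFree G := by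
  rintro ⟨a, b, c, d, -, -, -, -, -, hcd, hab, hac, had, hbc, hbd, hncd⟩
  have ha : a ∈ G.commonNeighbors c d := G.mem_commonNeighbors.2 ⟨hac.symm, had.symm⟩
  have hb : b ∈ G.commonNeighbors c d := G.mem_commonNeighbors.2 ⟨hbc.symm, hbd.symm⟩
  rcases mem_of_ne_of_not_adj hcover hc₁ hc₂ hcd hncd with ⟨hc, hd⟩ | ⟨hc, hd⟩
  · exact isIndepSet_commonNeighbors_of_matching hcover hm₁ hm₂ hc hd ha hb hab.ne hab
  · exact isIndepSet_commonNeighbors_of_matching (fun x ↦ (hcover x).symm) hm₂ hm₁ hc hd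
      ha hb hab.ne hab

end SimpleGraph

theorem stmt15_general {V : Type*} (G : SimpleGraph V) (Q₁ Q₂ : Set V)
    (hcover : Q₁ ∪ Q₂ = Set.univ)
    (hc₁ : G.IsClique Q₁) (hc₂ : G.IsClique Q₂)
    (hm₁ : ∀ x ∈ Q₁, ∀ y ∈ Q₂, ∀ z ∈ Q₂, G.Adj x y → G.Adj x z → y = z)
    (hm₂ : ∀ x ∈ Q₂, ∀ y ∈ Q₁, ∀ z ∈ Q₁, G.Adj x y → G.Adj x z → y = z) :
    ThreeP1Free G ∧ DiamondFree G := by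
  have mem : ∀ x, x ∈ Q₁ ∨ x ∈ Q₂ := Set.eq_univ_iff_forall.1 hcover
  exact ⟨G.threeP1Free_of_isClique_of_cover mem hc₁ hc₂,
    G.diamondFree_of_isClique_of_matching mem hc₁ hc₂ hm₁ hm₂⟩

/-- If the vertex set of `G` is partitioned into two cliques `Q₁, Q₂` such
that the edges between them form a matching, then `G` is
`{3P₁, diamond}`-free. -/
theorem stmt15 {V : Type*} (G : SimpleGraph V) (Q₁ Q₂ : Set V)
    (hcover : Q₁ ∪ Q₂ = Set.univ) (hdisj : Disjoint Q₁ Q₂)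
    (hc₁ : G.IsClique Q₁) (hc₂ : G.IsClique Q₂)
    (hm₁ : ∀ x ∈ Q₁, ∀ y ∈ Q₂, ∀ z ∈ Q₂, G.Adj x y → G.Adj x z → y = z)
    (hm₂ : ∀ x ∈ Q₂, ∀ y ∈ Q₁, ∀ z ∈ Q₁, G.Adj x y → G.Adj x z → y = z) :
    ThreeP1Free G ∧ DiamondFree G :=
  stmt15_general G Q₁ Q₂ hcover hc₁ hc₂ hm₁ hm₂
end

section
/- Let G be a bipartite graph with parts A and B containing vertices u ∈ B and v ∈ A such that N(u) = A \ {v} and N(v) = B \ {u} (a peanut-like bipartite graph with foci u, v). Then u and v are non-adjacent, and the maximum independent sets of G − {u,v} are in bijection with the minimum uv-separators of G via I ↦ V(G − {u,v}) \ I. -/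
open SimpleGraph

theorem Set.maxCard_iff_minCard_sdiff {α : Type*} {W : Set α} (hW : W.Finite)
    {P Q : Set α → Prop} (hQW : ∀ T, Q T → T ⊆ W)
    (hPQ : ∀ I ⊆ W, P I → Q (W \ I)) (hQP : ∀ T, Q T → P (W \ T)) {I : Set α} (hI : I ⊆ W) :
    (P I ∧ ∀ J ⊆ W, P J → J.ncard ≤ I.ncard) ↔
      (Q (W \ I) ∧ ∀ T, Q T → (W \ I).ncard ≤ T.ncard) := by
  have hcard : ∀ X ⊆ W, (W \ X).ncard + X.ncard = W.ncard :=
    fun X hX => Set.ncard_sdiff_add_ncard_of_subset hX hW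
  constructor
  · rintro ⟨hPI, hmax⟩
    refine ⟨hPQ I hI hPI, fun T hQT => ?_⟩
    have hTW := hQW T hQT
    have := hmax (W \ T) Set.sdiff_subset (hQP T hQT)
    have := hcard I hI
    have := hcard T hTW
    omega
  · rintro ⟨hQI, hmin⟩
    refine ⟨Set.sdiff_sdiff_cancel_left hI ▸ hQP _ hQI, fun J hJ hPJ => ?_⟩
    have := hmin (W \ J) (hPQ J hJ hPJ)
    have := hcard I hI
    have := hcard J hJ
    omega

section

variable {V : Type*} {G : SimpleGraph V} {A B : Set V} {u v : V}

theorem IsSep.subset_univ_diff_pair {T : Set V} (hT : IsSep G u v T) :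
    T ⊆ Set.univ \ {u, v} := by
  rintro x hx
  refine ⟨trivial, ?_⟩
  rintro (rfl | rfl)
  exacts [hT.1 hx, hT.2.1 hx]

theorem SimpleGraph.Walk.exists_dart_fst_snd_notMem_pair (hdisj : Disjoint A B)
    (hbip : ∀ x y : V, G.Adj x y → (x ∈ A ∧ y ∈ B) ∨ (x ∈ B ∧ y ∈ A))
    (hu : u ∈ B) (hv : v ∈ A) (hNu : G.neighborSet u ⊆ A \ {v}) (p : G.Walk u v) :
    ∃ d ∈ p.darts, d.fst ∉ ({u, v} : Set V) ∧ d.snd ∉ ({u, v} : Set V) := by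
  have hAB : ∀ {x}, x ∈ A → x ∉ B := fun hx => Set.disjoint_left.mp hdisj hx
  have huv : u ≠ v := fun h => hAB hv (h ▸ hu)
  obtain ⟨d, hd, hfst, hsnd⟩ := p.exists_boundary_dart (insert u (A \ {v})) (.inl rfl)
    (by simp [huv.symm])
  simp only [Set.mem_insert_iff, Set.mem_sdiff, Set.mem_singleton_iff, not_or, not_and,
    not_not] at hfst hsnd
  obtain ⟨hsndu, hsndA⟩ := hsnd
  rcases hfst with hfstu | ⟨hfstA, hfstv⟩
  · have := hNu (hfstu ▸ d.adj)
    exact absurd (hsndA this.1) this.2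
  have hsndB : d.snd ∈ B := by
    rcases hbip _ _ d.adj with ⟨-, h⟩ | ⟨h, -⟩
    exacts [h, absurd h (hAB hfstA)]
  refine ⟨d, hd, ?_, ?_⟩ <;> simp only [Set.mem_insert_iff, Set.mem_singleton_iff, not_or]
  · exact ⟨fun h => hAB hfstA (h ▸ hu), hfstv⟩
  · exact ⟨hsndu, fun h => hAB hv (h ▸ hsndB)⟩

theorem isSep_univ_diff_pair_sdiff (hdisj : Disjoint A B)
    (hbip : ∀ x y : V, G.Adj x y → (x ∈ A ∧ y ∈ B) ∨ (x ∈ B ∧ y ∈ A))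
    (hu : u ∈ B) (hv : v ∈ A) (hNu : G.neighborSet u ⊆ A \ {v}) {I : Set V}
    (hI : IsIndep G I) : IsSep G u v ((Set.univ \ {u, v}) \ I) := by
  refine ⟨by simp, by simp, fun p => ?_⟩
  obtain ⟨d, hd, hfst, hsnd⟩ := p.exists_dart_fst_snd_notMem_pair hdisj hbip hu hv hNu
  by_cases hfstI : d.fst ∈ I
  · have hsndI : d.snd ∉ I := fun hsndI => hI _ hfstI _ hsndI d.adj
    exact ⟨d.snd, ⟨⟨trivial, hsnd⟩, hsndI⟩, p.dart_snd_mem_support_of_mem_darts hd⟩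
  · exact ⟨d.fst, ⟨⟨trivial, hfst⟩, hfstI⟩, p.dart_fst_mem_support_of_mem_darts hd⟩

theorem isIndep_univ_diff_pair_sdiff
    (hbip : ∀ x y : V, G.Adj x y → (x ∈ A ∧ y ∈ B) ∨ (x ∈ B ∧ y ∈ A))
    (hNu : A \ {v} ⊆ G.neighborSet u) (hNv : B \ {u} ⊆ G.neighborSet v) {T : Set V}
    (hT : IsSep G u v T) : IsIndep G ((Set.univ \ {u, v}) \ T) := by
  have hAB : ∀ x y, x ∈ (Set.univ \ {u, v}) \ T → y ∈ (Set.univ \ {u, v}) \ T →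
      G.Adj x y → x ∈ A → y ∈ B → False := by
    rintro x y ⟨⟨-, hxuv⟩, hxT⟩ ⟨⟨-, hyuv⟩, hyT⟩ hxy hxA hyB
    simp only [Set.mem_insert_iff, Set.mem_singleton_iff, not_or] at hxuv hyuv
    have hux : G.Adj u x := hNu ⟨hxA, hxuv.2⟩
    have hyv : G.Adj y v := (hNv ⟨hyB, hyuv.1⟩).symm
    obtain ⟨w, hwT, hw⟩ := hT.2.2 (.cons hux (.cons hxy hyv.toWalk))
    simp only [Walk.support_cons, Walk.support_nil, List.mem_cons, List.not_mem_nil, or_false] at hw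
    rcases hw with rfl | rfl | rfl | rfl
    exacts [hT.1 hwT, hxT hwT, hyT hwT, hT.2.1 hwT]
  intro x hx y hy hxy
  rcases hbip x y hxy with ⟨hxA, hyB⟩ | ⟨hxB, hyA⟩
  exacts [hAB x y hx hy hxy hxA hyB, hAB y x hy hx hxy.symm hyA hxB]

end

theorem stmt18_general {V : Type*} [Fintype V] (G : SimpleGraph V) (A B : Set V)
    (u v : V) (hdisj : Disjoint A B)
    (hbip : ∀ x y : V, G.Adj x y → (x ∈ A ∧ y ∈ B) ∨ (x ∈ B ∧ y ∈ A))
    (hu : u ∈ B) (hv : v ∈ A)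
    (hNu : G.neighborSet u = A \ {v}) (hNv : G.neighborSet v = B \ {u}) :
    ¬ G.Adj u v ∧
    ∀ I : Set V, I ⊆ Set.univ \ {u, v} →
      ((IsIndep G I ∧
          ∀ J : Set V, J ⊆ Set.univ \ {u, v} → IsIndep G J → J.ncard ≤ I.ncard) ↔
        (IsSep G u v ((Set.univ \ {u, v}) \ I) ∧
          ∀ T : Set V, IsSep G u v T →
            ((Set.univ \ {u, v}) \ I).ncard ≤ T.ncard)) := by
  refine ⟨fun huv => (hNu.subset huv).2 rfl, fun I hI => ?_⟩
  exact Set.maxCard_iff_minCard_sdiff (Set.toFinite _) (fun _ => IsSep.subset_univ_diff_pair)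
    (fun _ _ => isSep_univ_diff_pair_sdiff hdisj hbip hu hv hNu.subset)
    (fun _ => isIndep_univ_diff_pair_sdiff hbip hNu.symm.subset hNv.symm.subset) hI

/-- In a peanut-like bipartite graph with foci `u ∈ B`, `v ∈ A`
(`N(u) = A \ {v}`, `N(v) = B \ {u}`), the foci are non-adjacent, and a set
`I ⊆ V \ {u,v}` is a maximum independent set of `G − {u,v}` iff its complement
`(V \ {u,v}) \ I` is a minimum `uv`-separator of `G`. -/
theorem stmt18 {V : Type*} [Fintype V] (G : SimpleGraph V) (A B : Set V)
    (u v : V) (hdisj : Disjoint A B) (hcover : A ∪ B = Set.univ)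
    (hbip : ∀ x y : V, G.Adj x y → (x ∈ A ∧ y ∈ B) ∨ (x ∈ B ∧ y ∈ A))
    (hu : u ∈ B) (hv : v ∈ A)
    (hNu : G.neighborSet u = A \ {v}) (hNv : G.neighborSet v = B \ {u}) :
    ¬ G.Adj u v ∧
    ∀ I : Set V, I ⊆ Set.univ \ {u, v} →
      ((IsIndep G I ∧
          ∀ J : Set V, J ⊆ Set.univ \ {u, v} → IsIndep G J → J.ncard ≤ I.ncard) ↔
        (IsSep G u v ((Set.univ \ {u, v}) \ I) ∧
          ∀ T : Set V, IsSep G u v T →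
            ((Set.univ \ {u, v}) \ I).ncard ≤ T.ncard)) :=
  stmt18_general G A B u v hdisj hbip hu hv hNu hNv
end
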